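/- arXiv:0810.2105 — 3 statements merged into one kernel-verified Lean document; each statement's English description precedes it below -/
import Mathlib

section
/- Let X₁, X₂, … be IID random variables on a standard discrete poset (S, ⪯) with common PDF f having support S and constant rate α, with UPF F, and let Y₁, Y₂, … be the associated ladder variables. Then for every n ≥ 1 and every chain y₁ ⪯ y₂ ⪯ ⋯ ⪯ y_n in S, P(Y₁ = y₁, Y₂ = y₂, …, Y_n = y_n) = α^n F(y_n). Consequently, for each y ∈ S, the conditional distribution of (Y₁, …, Y_{n−1}) given Y_n = y is uniform on the set of chains {(y₁, …, y_{n−1}) : y₁ ⪯ ⋯ ⪯ y_{n−1} ⪯ y}. -/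
open scoped ENNReal NNReal
open MeasureTheory ProbabilityTheory

/-- The upper probability function (UPF) of a density `f` on a discrete poset:
`F x = ∑_{t ⪰ x} f t`, computed in `[0,∞]`. -/
noncomputable def upf {S : Type*} [PartialOrder S] (f : S → ℝ≥0) (x : S) : ℝ≥0∞ :=
  ∑' t : {t : S // x ≤ t}, (f t : ℝ≥0∞)

/-- The ladder times of a sequence `X₀, X₁, X₂, …`: `N₀ = 0` and
`N_{n+1} = min {m > N_n : X_m ⪰ X_{N_n}}` (indexed from `0`, so `ladderTime X n`
is the `(n+1)`-st ladder time of the paper). -/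
noncomputable def ladderTime {Ω S : Type*} [PartialOrder S] (X : ℕ → Ω → S) :
    ℕ → Ω → ℕ
  | 0 => fun _ => 0
  | (n + 1) => fun ω =>
      sInf {m : ℕ | ladderTime X n ω < m ∧ X (ladderTime X n ω) ω ≤ X m ω}

/-- The ladder variables: `Y_n = X_{N_n}` (indexed from `0`, so `ladderVar X n` is the
`(n+1)`-st ladder variable of the paper). -/
noncomputable def ladderVar {Ω S : Type*} [PartialOrder S] (X : ℕ → Ω → S)
    (n : ℕ) (ω : Ω) : S :=
  X (ladderTime X n ω) ω

/-!
Almost surely every level `t` is exceeded infinitely often (second Borel–Cantelli lemma, since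
`F t > 0`), so the ladder times strictly increase. Up to a null set, the event
`{Y₁ = y₁, …, Yₙ = yₙ}` is then the disjoint union, over the gap vectors `g ∈ ℕⁿ⁻¹`, of the
cylinder events in which `X` visits `yᵢ` at the `i`-th epoch and avoids the up-set of `yᵢ` during
the `gᵢ` steps that follow. By independence such a cylinder has probability
`f y₁ * ∏ (1 - F yᵢ) ^ gᵢ * f yᵢ₊₁`; summing the geometric series in each `gᵢ` leaves
`f y₁ * ∏ f yᵢ₊₁ / F yᵢ`, which telescopes to `αⁿ F yₙ` because `f = α F`. As this does not depend
on `y₁, …, yₙ₋₁`, summing over the chains below `y` gives `P (Yₙ = y) = #chains * αⁿ F y`, and the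
conditional law is uniform.
-/

open Filter Set

def ladderEvent {Ω S : Type*} [PartialOrder S] (X : ℕ → Ω → S) (n : ℕ) (y : ℕ → S) : Set Ω :=
  {ω | ∀ i < n, ladderVar X i ω = y i}

theorem Nat.sInf_eq_iff {T : Set ℕ} {k : ℕ} :
    sInf T = k ↔ (k ∈ T ∧ ∀ j < k, j ∉ T) ∨ (k = 0 ∧ T = ∅) := by
  rcases T.eq_empty_or_nonempty with rfl | hT
  · simp [eq_comm]
  · refine ⟨fun h => .inl ⟨h ▸ Nat.sInf_mem hT, fun j hj => Nat.notMem_of_lt_sInf (h ▸ hj)⟩, ?_⟩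
    rintro (⟨hk, hlt⟩ | ⟨-, rfl⟩)
    · exact le_antisymm (Nat.sInf_le hk) (not_lt.1 fun h => hlt _ h (Nat.sInf_mem hT))
    · exact absurd hT Set.not_nonempty_empty

theorem measurable_nat_sInf {Ω : Type*} [MeasurableSpace Ω] {T : Ω → Set ℕ}
    (hT : ∀ k, MeasurableSet {ω | k ∈ T ω}) : Measurable fun ω => sInf (T ω) := by
  refine measurable_to_countable' fun k => ?_
  have hT' j : Measurable fun ω => j ∈ T ω := measurableSet_setOfPred.1 (hT j)
  simp only [preimage, mem_singleton_iff, Nat.sInf_eq_iff, eq_empty_iff_forall_notMem]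
  exact measurableSet_setOfPred.2 <|
    ((hT' k).and (.forall fun j => .forall fun _ => (hT' j).not)).or
    (measurable_const.and (.forall fun j => (hT' j).not))

section Measurability

variable {Ω S : Type*} [MeasurableSpace Ω] [MeasurableSpace S] {X : ℕ → Ω → S}

theorem measurable_apply_of_measurable_index {N : Ω → ℕ} (hN : Measurable N)
    (hX : ∀ i, Measurable (X i)) : Measurable fun ω => X (N ω) ω :=
  (measurable_from_prod_countable_left (f := fun p : Ω × ℕ => X p.2 p.1) hX).comp
    (measurable_id.prodMk hN)

variable [PartialOrder S] [Countable S] [MeasurableSingletonClass S]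

theorem measurable_ladderTime (hX : ∀ i, Measurable (X i)) : ∀ n, Measurable (ladderTime X n)
  | 0 => measurable_const
  | n + 1 => by
    have hN := measurable_ladderTime hX n
    have hY := measurable_apply_of_measurable_index hN hX
    refine measurable_nat_sInf fun m => ?_
    exact hN.prodMk (hY.prodMk (hX m))
      (.of_discrete (s := {p : ℕ × S × S | p.1 < m ∧ p.2.1 ≤ p.2.2}))

theorem measurable_ladderVar (hX : ∀ i, Measurable (X i)) (n : ℕ) :
    Measurable (ladderVar X n) :=
  measurable_apply_of_measurable_index (N := ladderTime X n) (measurable_ladderTime hX n) hX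

theorem measurableSet_ladderEvent (hX : ∀ i, Measurable (X i)) (n : ℕ) (y : ℕ → S) :
    MeasurableSet (ladderEvent X n y) := by
  simp only [ladderEvent, ofPred_forall]
  exact .iInter fun i => .iInter fun _ => measurable_ladderVar hX i (measurableSet_singleton (y i))

end Measurability

section Upf

variable {S : Type*} [PartialOrder S] {f : S → ℝ≥0}

theorem coe_le_upf (t : S) : (f t : ℝ≥0∞) ≤ upf f t :=
  ENNReal.le_tsum (⟨t, le_rfl⟩ : {s : S // t ≤ s})

theorem upf_pos (hsupp : ∀ x, 0 < f x) (t : S) : 0 < upf f t :=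
  (ENNReal.coe_pos.2 (hsupp t)).trans_le (coe_le_upf t)

theorem upf_le_one (hpdf : ∑' x, (f x : ℝ≥0∞) = 1) (t : S) : upf f t ≤ 1 :=
  hpdf ▸ ENNReal.tsum_comp_le_tsum_of_injective Subtype.val_injective _

theorem upf_ne_top (hpdf : ∑' x, (f x : ℝ≥0∞) = 1) (t : S) : upf f t ≠ ⊤ :=
  ne_top_of_le_ne_top ENNReal.one_ne_top (upf_le_one hpdf t)

end Upf

section Law

variable {Ω S : Type*} [MeasurableSpace Ω] [MeasurableSpace S] [Countable S]
  [MeasurableSingletonClass S] {P : Measure Ω} {f : S → ℝ≥0} {X : ℕ → Ω → S}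
  (hX : ∀ i, Measurable (X i)) (hdist : ∀ i x, P (X i ⁻¹' {x}) = f x)
include hX hdist

theorem measure_preimage_eq_tsum (i : ℕ) (B : Set S) :
    P (X i ⁻¹' B) = ∑' x : B, (f x : ℝ≥0∞) := by
  rw [← tsum_measure_preimage_singleton B.to_countable fun x _ => hX i (.of_discrete)]
  exact tsum_congr fun x => hdist i x

variable [PartialOrder S]

theorem measure_preimage_Ici (i : ℕ) (t : S) : P (X i ⁻¹' Ici t) = upf f t :=
  measure_preimage_eq_tsum hX hdist i (Ici t)

theorem measure_preimage_Ici_compl [IsProbabilityMeasure P] (i : ℕ) (t : S) :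
    P (X i ⁻¹' (Ici t)ᶜ) = 1 - upf f t := by
  rw [preimage_compl, prob_compl_eq_one_sub (hX i .of_discrete), measure_preimage_Ici hX hdist]

theorem ae_exists_gt_le [IsProbabilityMeasure P] (hindep : iIndepFun X P)
    (hsupp : ∀ x, 0 < f x) : ∀ᵐ ω ∂P, ∀ (j : ℕ) (t : S), ∃ r > j, t ≤ X r ω := by
  have hfreq (t : S) : ∀ᵐ ω ∂P, ω ∈ limsup (fun r => X r ⁻¹' Ici t) atTop := by
    have hmeas r : MeasurableSet (X r ⁻¹' Ici t) := hX r .of_discrete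
    have hlimsup := measure_limsup_eq_one hmeas
      ((iIndepSet_iff_meas_biInter hmeas).2 fun s =>
        hindep.meas_biInter fun r _ => ⟨Ici t, .of_discrete, rfl⟩)
      (by simp_rw [measure_preimage_Ici hX hdist]
          exact ENNReal.tsum_const_eq_top_of_ne_zero (upf_pos hsupp t).ne')
    exact (ae_iff_measure_eq (p := (· ∈ limsup (fun r => X r ⁻¹' Ici t) atTop))
      (MeasurableSet.measurableSet_limsup hmeas).nullMeasurableSet).2
        (hlimsup.trans measure_univ.symm)
  filter_upwards [ae_all_iff.2 hfreq] with ω hω j t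
  exact frequently_atTop'.1 (mem_limsup_iff_frequently_mem.1 (hω t)) j

end Law

section LadderTime

variable {Ω S : Type*} [PartialOrder S] {X : ℕ → Ω → S} {ω : Ω}

theorem ladderTime_succ_eq {n k : ℕ} (hlt : ladderTime X n ω < k)
    (hle : ladderVar X n ω ≤ X k ω)
    (hmin : ∀ r, ladderTime X n ω < r → r < k → ¬ ladderVar X n ω ≤ X r ω) :
    ladderTime X (n + 1) ω = k :=
  le_antisymm (Nat.sInf_le ⟨hlt, hle⟩)
    (le_csInf ⟨k, hlt, hle⟩ fun r hr => not_lt.1 fun hrk => hmin r hr.1 hrk hr.2)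

theorem not_le_of_lt_ladderTime_succ {n r : ℕ} (hr : ladderTime X n ω < r)
    (hr' : r < ladderTime X (n + 1) ω) : ¬ ladderVar X n ω ≤ X r ω :=
  fun hle => Nat.notMem_of_lt_sInf hr' ⟨hr, hle⟩

variable (hω : ∀ (j : ℕ) (t : S), ∃ r > j, t ≤ X r ω)
include hω

theorem ladderTime_lt_succ_and_ladderVar_le_succ (n : ℕ) :
    ladderTime X n ω < ladderTime X (n + 1) ω ∧ ladderVar X n ω ≤ ladderVar X (n + 1) ω :=
  Nat.sInf_mem (hω (ladderTime X n ω) (ladderVar X n ω))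

theorem monotone_ladderVar : Monotone fun n => ladderVar X n ω :=
  monotone_nat_of_le_succ fun n => (ladderTime_lt_succ_and_ladderVar_le_succ hω n).2

end LadderTime

def gapEpoch (g : ℕ → ℕ) : ℕ → ℕ
  | 0 => 0
  | i + 1 => gapEpoch g i + g i + 1

theorem gapEpoch_strictMono (g : ℕ → ℕ) : StrictMono (gapEpoch g) :=
  strictMono_nat_of_lt_succ fun i => by simp only [gapEpoch]; omega

theorem gapEpoch_eq_of_gap_eq {g : ℕ → ℕ} {N : ℕ → ℕ} (h0 : N 0 = 0) {m : ℕ}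
    (hg : ∀ i < m, g i = N (i + 1) - N i - 1) (hN : ∀ i < m, N i < N (i + 1)) :
    ∀ i ≤ m, gapEpoch g i = N i
  | 0, _ => h0.symm
  | i + 1, hi => by
    have hi' := gapEpoch_eq_of_gap_eq h0 hg hN i (by omega)
    have hgi := hg i hi
    have hNi := hN i hi
    simp only [gapEpoch]
    omega

theorem eq_of_gapEpoch_eq {g g' : ℕ → ℕ} {m : ℕ} (h : ∀ i ≤ m, gapEpoch g i = gapEpoch g' i)
    (i : ℕ) (hi : i < m) : g i = g' i := by
  have h1 := h (i + 1) hi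
  have h2 := h i hi.le
  simp only [gapEpoch] at h1
  omega

section GapEvent

variable {Ω S : Type*} [PartialOrder S] {X : ℕ → Ω → S} {g : ℕ → ℕ} {y : ℕ → S} {ω : Ω}

/-- For a chain `y`, the event that the first `m + 1` ladder variables are `y 0, …, y m` and the
ladder times are `gapEpoch g 0, …, gapEpoch g m`. -/
def gapEvent (X : ℕ → Ω → S) (g : ℕ → ℕ) (y : ℕ → S) : ℕ → Set Ω
  | 0 => X 0 ⁻¹' {y 0}
  | m + 1 => gapEvent X g y m ∩
      (⋂ r ∈ Finset.Ioo (gapEpoch g m) (gapEpoch g (m + 1)), X r ⁻¹' (Ici (y m))ᶜ) ∩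
      X (gapEpoch g (m + 1)) ⁻¹' {y (m + 1)}

theorem ladderTime_eq_gapEpoch_of_mem_gapEvent :
    ∀ {m}, (∀ i < m, y i ≤ y (i + 1)) → ω ∈ gapEvent X g y m →
      ∀ i ≤ m, ladderTime X i ω = gapEpoch g i ∧ ladderVar X i ω = y i
  | 0, _, hω, i, hi => by
    obtain rfl : i = 0 := by omega
    exact ⟨rfl, hω⟩
  | m + 1, hy, ⟨⟨hω, hgap⟩, hlast⟩, i, hi => by
    have IH := ladderTime_eq_gapEpoch_of_mem_gapEvent (fun i hi => hy i (by omega)) hω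
    rcases hi.lt_or_eq with hi | rfl
    · exact IH i (by omega)
    obtain ⟨hN, hY⟩ := IH m le_rfl
    have hlast : X (gapEpoch g (m + 1)) ω = y (m + 1) := hlast
    have hN' : ladderTime X (m + 1) ω = gapEpoch g (m + 1) := by
      refine ladderTime_succ_eq ?_ ?_ fun r hr hr' => ?_
      · rw [hN]; exact gapEpoch_strictMono g m.lt_succ_self
      · rw [hY, hlast]; exact hy m m.lt_succ_self
      · rw [hY]
        exact mem_iInter₂.1 hgap r (Finset.mem_Ioo.2 ⟨hN ▸ hr, hr'⟩)
    exact ⟨hN', by rw [ladderVar, hN', hlast]⟩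

variable {m : ℕ}

theorem gapEvent_subset_ladderEvent (hy : ∀ i < m, y i ≤ y (i + 1)) :
    gapEvent X g y m ⊆ ladderEvent X (m + 1) y :=
  fun _ hω i hi => (ladderTime_eq_gapEpoch_of_mem_gapEvent hy hω i (by omega)).2

theorem mem_gapEvent_of_mem_ladderEvent (hω : ∀ (j : ℕ) (t : S), ∃ r > j, t ≤ X r ω) :
    ∀ {m}, ω ∈ ladderEvent X (m + 1) y →
      (∀ i < m, g i = ladderTime X (i + 1) ω - ladderTime X i ω - 1) → ω ∈ gapEvent X g y m
  | 0, hY, _ => hY 0 one_pos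
  | m + 1, hY, hg => by
    have hN := gapEpoch_eq_of_gap_eq rfl hg
      (fun i _ => (ladderTime_lt_succ_and_ladderVar_le_succ hω i).1)
    refine ⟨⟨mem_gapEvent_of_mem_ladderEvent hω (fun i hi => hY i (by omega))
      (fun i hi => hg i (by omega)), mem_iInter₂.2 fun r hr => ?_⟩, ?_⟩
    · rw [Finset.mem_Ioo, hN m (by omega), hN (m + 1) le_rfl] at hr
      rw [mem_preimage, mem_compl_iff, mem_Ici, ← hY m (by omega)]
      exact not_le_of_lt_ladderTime_succ hr.1 hr.2
    · rw [mem_preimage, hN (m + 1) le_rfl]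
      exact hY (m + 1) (by omega)

theorem ladderEvent_ae_subset_iUnion_gapEvent [MeasurableSpace Ω] {P : Measure Ω}
    (h : ∀ᵐ ω ∂P, ∀ (j : ℕ) (t : S), ∃ r > j, t ≤ X r ω) :
    ladderEvent X (m + 1) y ≤ᵐ[P]
      ⋃ g : Fin m → ℕ, gapEvent X (Function.extend Fin.val g 0) y m := by
  filter_upwards [h] with ω hω hY
  refine mem_iUnion.2 ⟨fun i => ladderTime X (i + 1) ω - ladderTime X i ω - 1,
    mem_gapEvent_of_mem_ladderEvent hω hY fun i hi => ?_⟩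
  exact Fin.val_injective.extend_apply _ _ (⟨i, hi⟩ : Fin m)

theorem pairwise_disjoint_gapEvent (hy : ∀ i < m, y i ≤ y (i + 1)) :
    Pairwise (Function.onFun Disjoint fun g : Fin m → ℕ =>
      gapEvent X (Function.extend Fin.val g 0) y m) := by
  refine fun g g' hne => disjoint_left.2 fun ω hω hω' => hne (funext fun i => ?_)
  have := eq_of_gapEpoch_eq (fun i hi =>
      (ladderTime_eq_gapEpoch_of_mem_gapEvent hy hω i hi).1.symm.trans
        (ladderTime_eq_gapEpoch_of_mem_gapEvent hy hω' i hi).1) i i.2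
  simpa only [Fin.val_injective.extend_apply] using this

end GapEvent

section Independence

variable {Ω S : Type*} [mS : MeasurableSpace S] {X : ℕ → Ω → S}

theorem measurableSet_iSup_comap_preimage {s : Set ℕ} {r : ℕ} (hr : r ∈ s) {B : Set S}
    (hB : MeasurableSet B) : MeasurableSet[⨆ i ∈ s, mS.comap (X i)] (X r ⁻¹' B) :=
  le_iSup₂ (f := fun i (_ : i ∈ s) => mS.comap (X i)) r hr _ ⟨B, hB, rfl⟩

theorem MeasurableSet.iSup_comap_mono {s t : Set ℕ} (hst : s ⊆ t) {A : Set Ω}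
    (hA : MeasurableSet[⨆ i ∈ s, mS.comap (X i)] A) :
    MeasurableSet[⨆ i ∈ t, mS.comap (X i)] A :=
  biSup_mono (f := fun i => mS.comap (X i)) hst _ hA

theorem ProbabilityTheory.iIndepFun.measure_inter_eq_mul [MeasurableSpace Ω] {P : Measure Ω}
    (hX : ∀ i, Measurable (X i)) (hindep : iIndepFun X P)
    {s t : Set ℕ} (hst : Disjoint s t) {A B : Set Ω}
    (hA : MeasurableSet[⨆ i ∈ s, mS.comap (X i)] A)
    (hB : MeasurableSet[⨆ i ∈ t, mS.comap (X i)] B) : P (A ∩ B) = P A * P B :=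
  (Indep_iff _ _ _).1 (indep_iSup_of_disjoint (fun i => (hX i).comap_le)
    ((iIndepFun_iff_iIndep _ _ _).1 hindep) hst) A B hA hB

end Independence

section GapEventLaw

variable {Ω S : Type*} [PartialOrder S] [mS : MeasurableSpace S] [Countable S]
  [MeasurableSingletonClass S] {X : ℕ → Ω → S} {g : ℕ → ℕ} {y : ℕ → S}

theorem measurableSet_gapEvent :
    ∀ m, MeasurableSet[⨆ r ∈ Iic (gapEpoch g m), mS.comap (X r)] (gapEvent X g y m)
  | 0 => measurableSet_iSup_comap_preimage (mem_Iic.2 le_rfl) .of_discrete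
  | m + 1 => by
    have hle : gapEpoch g m ≤ gapEpoch g (m + 1) := (gapEpoch_strictMono g m.lt_succ_self).le
    refine .inter (.inter ?_ ?_)
      (measurableSet_iSup_comap_preimage (mem_Iic.2 le_rfl) .of_discrete)
    · exact (measurableSet_gapEvent m).iSup_comap_mono (Iic_subset_Iic.2 hle)
    · exact Finset.measurableSet_biInter _ fun r hr => measurableSet_iSup_comap_preimage
        (mem_Iic.2 (Finset.mem_Ioo.1 hr).2.le) .of_discrete

variable [MeasurableSpace Ω] {P : Measure Ω} [IsProbabilityMeasure P] {f : S → ℝ≥0}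
  (hX : ∀ i, Measurable (X i)) (hindep : iIndepFun X P) (hdist : ∀ i x, P (X i ⁻¹' {x}) = f x)
include hX hindep hdist

theorem measure_gapEvent_succ (m : ℕ) :
    P (gapEvent X g y (m + 1)) =
      P (gapEvent X g y m) * ((1 - upf f (y m)) ^ g m * f (y (m + 1))) := by
  have hlt : gapEpoch g m < gapEpoch g (m + 1) := gapEpoch_strictMono g m.lt_succ_self
  set G := ⋂ r ∈ Finset.Ioo (gapEpoch g m) (gapEpoch g (m + 1)), X r ⁻¹' (Ici (y m))ᶜ
  have hG : P G = (1 - upf f (y m)) ^ g m := by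
    rw [hindep.meas_biInter fun r _ => ⟨_, .of_discrete, rfl⟩,
      Finset.prod_congr rfl fun r _ => measure_preimage_Ici_compl hX hdist r (y m),
      Finset.prod_const, Nat.card_Ioo]
    congr 1
    simp only [gapEpoch]
    omega
  have hGmeas (s : Set ℕ) (hs : ∀ r, gapEpoch g m < r → r < gapEpoch g (m + 1) → r ∈ s) :
      MeasurableSet[⨆ i ∈ s, mS.comap (X i)] G :=
    Finset.measurableSet_biInter _ fun r hr => measurableSet_iSup_comap_preimage
      (hs r (Finset.mem_Ioo.1 hr).1 (Finset.mem_Ioo.1 hr).2) .of_discrete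
  have hA := measurableSet_gapEvent (X := X) (g := g) (y := y) m
  have hsplit : gapEvent X g y (m + 1) =
      gapEvent X g y m ∩ G ∩ X (gapEpoch g (m + 1)) ⁻¹' {y (m + 1)} := rfl
  have hpast : MeasurableSet[⨆ i ∈ Iio (gapEpoch g (m + 1)), mS.comap (X i)]
      (gapEvent X g y m ∩ G) :=
    .inter (hA.iSup_comap_mono (Iic_subset_Iio.2 hlt)) (hGmeas _ fun r _ hr => hr)
  rw [hsplit, hindep.measure_inter_eq_mul hX (disjoint_singleton_right.2 self_notMem_Iio) hpast
      (measurableSet_iSup_comap_preimage (mem_singleton _) .of_discrete),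
    hindep.measure_inter_eq_mul hX (Iic_disjoint_Ioi le_rfl) hA (hGmeas _ fun r hr _ => hr),
    hG, hdist, mul_assoc]

theorem measure_gapEvent (m : ℕ) :
    P (gapEvent X g y m) =
      f (y 0) * ∏ i ∈ Finset.range m, ((1 - upf f (y i)) ^ g i * f (y (i + 1))) := by
  induction m with
  | zero => simp [gapEvent, hdist]
  | succ m ih => rw [measure_gapEvent_succ hX hindep hdist, ih, Finset.prod_range_succ, mul_assoc]

end GapEventLaw

theorem ENNReal.tsum_pi_prod {β : Type*} :
    ∀ (m : ℕ) (h : Fin m → β → ℝ≥0∞), ∑' g : Fin m → β, ∏ i, h i (g i) = ∏ i, ∑' b, h i b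
  | 0, h => by simp
  | m + 1, h => by
    rw [← (Fin.consEquiv fun _ => β).tsum_eq, ENNReal.tsum_prod', Fin.prod_univ_succ,
      ← ENNReal.tsum_mul_right]
    simp_rw [Fin.consEquiv_apply, Fin.prod_univ_succ, Fin.cons_zero, Fin.cons_succ,
      ENNReal.tsum_mul_left, ENNReal.tsum_pi_prod m]

section Rate

variable {S : Type*} [PartialOrder S] {f : S → ℝ≥0}

theorem tsum_geometric_upf (hpdf : ∑' x, (f x : ℝ≥0∞) = 1) (t : S) (c : ℝ≥0∞) :
    ∑' k : ℕ, (1 - upf f t) ^ k * c = (upf f t)⁻¹ * c := by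
  rw [ENNReal.tsum_mul_right, ENNReal.tsum_geometric,
    ENNReal.sub_sub_cancel ENNReal.one_ne_top (upf_le_one hpdf t)]

theorem prod_inv_upf_mul_eq_of_constRate (hsupp : ∀ x, 0 < f x) (hpdf : ∑' x, (f x : ℝ≥0∞) = 1)
    {a : ℝ≥0∞} (hrate : ∀ x, (f x : ℝ≥0∞) = a * upf f x) (y : ℕ → S) (m : ℕ) :
    f (y 0) * ∏ i ∈ Finset.range m, ((upf f (y i))⁻¹ * f (y (i + 1))) =
      a ^ (m + 1) * upf f (y m) := by
  induction m with
  | zero => simp [hrate]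
  | succ m ih =>
    rw [Finset.prod_range_succ, ← mul_assoc, ih, hrate, ← mul_assoc, mul_assoc _ (upf f _),
      ENNReal.mul_inv_cancel (upf_pos hsupp _).ne' (upf_ne_top hpdf _), mul_one, ← mul_assoc,
      ← pow_succ]

end Rate

section Joint

variable {Ω S : Type*} [MeasurableSpace Ω] [PartialOrder S] [mS : MeasurableSpace S] [Countable S]
  [MeasurableSingletonClass S] {P : Measure Ω} [IsProbabilityMeasure P] {f : S → ℝ≥0}
  {X : ℕ → Ω → S} (hX : ∀ i, Measurable (X i)) (hindep : iIndepFun X P)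
  (hdist : ∀ i x, P (X i ⁻¹' {x}) = f x) (hsupp : ∀ x, 0 < f x)
include hX hindep hdist hsupp

theorem measure_ladderEvent_eq_tsum {m : ℕ} {y : ℕ → S} (hy : ∀ i < m, y i ≤ y (i + 1)) :
    P (ladderEvent X (m + 1) y) =
      ∑' g : Fin m → ℕ, P (gapEvent X (Function.extend Fin.val g 0) y m) := by
  rw [← measure_iUnion (pairwise_disjoint_gapEvent hy) fun g =>
    (iSup₂_le fun r _ => (hX r).comap_le : ⨆ r ∈ _, mS.comap (X r) ≤ _) _
      (measurableSet_gapEvent m)]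
  exact le_antisymm
    (measure_mono_ae (ladderEvent_ae_subset_iUnion_gapEvent
      (ae_exists_gt_le hX hdist hindep hsupp)))
    (measure_mono (iUnion_subset fun g => gapEvent_subset_ladderEvent hy))

theorem measure_ladderEvent_of_constRate (hpdf : ∑' x, (f x : ℝ≥0∞) = 1) {a : ℝ≥0∞}
    (hrate : ∀ x, (f x : ℝ≥0∞) = a * upf f x) {m : ℕ} {y : ℕ → S}
    (hy : ∀ i < m, y i ≤ y (i + 1)) :
    P (ladderEvent X (m + 1) y) = a ^ (m + 1) * upf f (y m) := by
  have hterm (g : Fin m → ℕ) : P (gapEvent X (Function.extend Fin.val g 0) y m) =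
      f (y 0) * ∏ i : Fin m, ((1 - upf f (y i)) ^ g i * f (y (i + 1))) := by
    rw [measure_gapEvent hX hindep hdist, ← Fin.prod_univ_eq_prod_range]
    simp only [Fin.val_injective.extend_apply]
  rw [measure_ladderEvent_eq_tsum hX hindep hdist hsupp hy, tsum_congr hterm,
    ENNReal.tsum_mul_left,
    ENNReal.tsum_pi_prod m fun i k => (1 - upf f (y i)) ^ k * f (y (i + 1))]
  simp_rw [tsum_geometric_upf hpdf]
  rw [Fin.prod_univ_eq_prod_range (fun i => (upf f (y i))⁻¹ * f (y (i + 1))),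
    prod_inv_upf_mul_eq_of_constRate hsupp hpdf hrate]

end Joint

def chainsBelow {S : Type*} [Preorder S] (m : ℕ) (y : S) : Set (Fin m → S) :=
  {c | Monotone c ∧ ∀ i, c i ≤ y}

theorem finite_chainsBelow {S : Type*} [Preorder S] (hfin : ∀ x : S, {t | t ≤ x}.Finite)
    (m : ℕ) (y : S) : (chainsBelow m y).Finite :=
  (Set.Finite.pi' fun _ => hfin y).subset fun _ hc i => hc.2 i

def extendByConst {S : Type*} {m : ℕ} (c : Fin m → S) (y : S) (i : ℕ) : S :=
  if h : i < m then c ⟨i, h⟩ else y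

section ExtendByConst

variable {Ω S : Type*} [PartialOrder S] {X : ℕ → Ω → S} {m : ℕ} {y : S}

theorem setOf_ladderVar_eq_iUnion :
    {ω | ladderVar X m ω = y} = ⋃ c : Fin m → S, ladderEvent X (m + 1) (extendByConst c y) := by
  ext ω
  refine ⟨fun hω => mem_iUnion.2 ⟨fun i => ladderVar X i ω, fun i hi => ?_⟩, fun hω => ?_⟩
  · by_cases h : i < m
    · simp [extendByConst, h]
    · simpa [extendByConst, h, show i = m by omega] using hω
  · obtain ⟨c, hc⟩ := mem_iUnion.1 hω
    simpa [extendByConst] using hc m (by omega)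

theorem pairwise_disjoint_ladderEvent_extendByConst :
    Pairwise (Function.onFun Disjoint fun c : Fin m → S =>
      ladderEvent X (m + 1) (extendByConst c y)) :=
  fun _ _ hne => disjoint_left.2 fun _ hω hω' => hne (funext fun i => by
    simpa [extendByConst] using (hω i (by omega)).symm.trans (hω' i (by omega)))

theorem ladderEvent_succ_update (c : ℕ → S) :
    {ω | ladderVar X m ω = y} ∩ ladderEvent X m c =
      ladderEvent X (m + 1) (Function.update c m y) := by
  ext ω
  simp only [ladderEvent, mem_inter_iff, mem_ofPred_eq, Nat.forall_lt_succ_right,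
    Function.update_self]
  exact and_comm.trans (and_congr_left fun _ =>
    forall₂_congr fun i hi => by rw [Function.update_of_ne hi.ne])

end ExtendByConst

section Conditional

variable {Ω S : Type*} [MeasurableSpace Ω] [PartialOrder S] [MeasurableSpace S] [Countable S]
  [MeasurableSingletonClass S] {P : Measure Ω} [IsProbabilityMeasure P] {f : S → ℝ≥0}
  {X : ℕ → Ω → S} (hX : ∀ i, Measurable (X i)) (hindep : iIndepFun X P)
  (hdist : ∀ i x, P (X i ⁻¹' {x}) = f x) (hsupp : ∀ x, 0 < f x)
  (hpdf : ∑' x, (f x : ℝ≥0∞) = 1) {a : ℝ≥0∞} (hrate : ∀ x, (f x : ℝ≥0∞) = a * upf f x)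
include hX hindep hdist hsupp hpdf hrate

theorem measure_ladderEvent_extendByConst {m : ℕ} (y : S) (c : Fin m → S) :
    P (ladderEvent X (m + 1) (extendByConst c y)) =
      (chainsBelow m y).indicator (fun _ => a ^ (m + 1) * upf f y) c := by
  by_cases hc : c ∈ chainsBelow m y
  · rw [indicator_of_mem hc, measure_ladderEvent_of_constRate hX hindep hdist hsupp hpdf hrate]
    · simp [extendByConst]
    · intro i hi
      by_cases hi' : i + 1 < m
      · simpa [extendByConst, hi, hi'] using hc.1 (Nat.le_succ i)
      · simpa [extendByConst, hi, hi'] using hc.2 ⟨i, hi⟩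
  · rw [indicator_of_notMem hc, measure_eq_zero_iff_ae_notMem]
    filter_upwards [ae_exists_gt_le hX hdist hindep hsupp] with ω hω hmem
    have hc' (i : Fin m) : c i = ladderVar X i ω := by
      simpa [extendByConst] using (hmem i (by omega)).symm
    have hy : y = ladderVar X m ω := by simpa [extendByConst] using (hmem m (by omega)).symm
    refine hc ⟨fun i j hij => ?_, fun i => ?_⟩
    · rw [hc', hc']
      exact monotone_ladderVar hω hij
    · rw [hc', hy]
      exact monotone_ladderVar hω i.2.le

theorem measure_ladderVar_eq (hfin : ∀ x : S, {t | t ≤ x}.Finite) (m : ℕ) (y : S) :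
    P {ω | ladderVar X m ω = y} =
      Nat.card (chainsBelow m y) * (a ^ (m + 1) * upf f y) := by
  rw [setOf_ladderVar_eq_iUnion, measure_iUnion pairwise_disjoint_ladderEvent_extendByConst
      fun c => measurableSet_ladderEvent hX _ _,
    tsum_congr (measure_ladderEvent_extendByConst hX hindep hdist hsupp hpdf hrate y),
    ← tsum_subtype, ENNReal.tsum_const,
    @ENat.card_eq_coe_natCard _ (finite_chainsBelow hfin m y).to_subtype, ENat.toENNReal_coe]

theorem cond_ladderEvent_ladderVar_eq (hfin : ∀ x : S, {t | t ≤ x}.Finite) (m : ℕ) (y : S)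
    (c : ℕ → S) (hc : ∀ i, i + 1 < m → c i ≤ c (i + 1)) (hcy : ∀ i < m, c i ≤ y) :
    P[ladderEvent X m c | {ω | ladderVar X m ω = y}] =
      (Nat.card (chainsBelow m y) : ℝ≥0∞)⁻¹ := by
  obtain ⟨ha, hF⟩ := mul_ne_zero_iff.1 ((hrate y).symm ▸ ENNReal.coe_ne_zero.2 (hsupp y).ne')
  have ha' : a ≠ ⊤ := fun h => ENNReal.coe_ne_top (r := f y) (by rw [hrate, h, ENNReal.top_mul hF])
  have hcard : Nat.card (chainsBelow m y) ≠ 0 :=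
    Nat.card_ne_zero.2 ⟨⟨⟨fun _ => y, monotone_const, fun _ => le_rfl⟩⟩,
      (finite_chainsBelow hfin m y).to_subtype⟩
  have hchain : ∀ i < m, Function.update c m y i ≤ Function.update c m y (i + 1) := by
    intro i hi
    rw [Function.update_of_ne hi.ne]
    by_cases h : i + 1 < m
    · rw [Function.update_of_ne h.ne]
      exact hc i h
    · rw [show i + 1 = m by omega, Function.update_self]
      exact hcy i hi
  rw [cond_apply (s := {ω | ladderVar X m ω = y})
      (measurable_ladderVar hX m (measurableSet_singleton y)),
    ladderEvent_succ_update,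
    measure_ladderEvent_of_constRate hX hindep hdist hsupp hpdf hrate hchain, Function.update_self,
    measure_ladderVar_eq hX hindep hdist hsupp hpdf hrate hfin,
    ENNReal.mul_inv (.inl (Nat.cast_ne_zero.2 hcard)) (.inl (ENNReal.natCast_ne_top _)), mul_assoc,
    ENNReal.inv_mul_cancel (by simp [ha, hF])
      (ENNReal.mul_ne_top (ENNReal.pow_ne_top ha') (upf_ne_top hpdf y)), mul_one]

end Conditional

theorem ladderVar_joint_pdf_constantRate_general
    {S : Type*} [Countable S] [PartialOrder S] [MeasurableSpace S]
    [MeasurableSingletonClass S]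
    (hfin : ∀ x : S, {t : S | t ≤ x}.Finite)
    {Ω : Type*} [MeasurableSpace Ω] (P : Measure Ω) [IsProbabilityMeasure P]
    (f : S → ℝ≥0)
    (hsupp : ∀ x : S, 0 < f x)
    (hpdf : ∑' x : S, (f x : ℝ≥0∞) = 1)
    (α : ℝ)
    (hrate : ∀ x : S, (f x : ℝ≥0∞) = ENNReal.ofReal α * upf f x)
    (X : ℕ → Ω → S)
    (hmeas : ∀ i, Measurable (X i))
    (hindep : iIndepFun X P)
    (hdist : ∀ i (x : S), P (X i ⁻¹' {x}) = (f x : ℝ≥0∞)) :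
    (∀ n : ℕ, 1 ≤ n → ∀ y : ℕ → S, (∀ i, i + 1 < n → y i ≤ y (i + 1)) →
      P {ω | ∀ i < n, ladderVar X i ω = y i}
        = ENNReal.ofReal α ^ n * upf f (y (n - 1))) ∧
    (∀ n : ℕ, 1 ≤ n → ∀ y : S, ∀ c : ℕ → S,
      (∀ i, i + 1 < n - 1 → c i ≤ c (i + 1)) → (∀ i, i < n - 1 → c i ≤ y) →
      P[{ω | ∀ i < n - 1, ladderVar X i ω = c i} | {ω | ladderVar X (n - 1) ω = y}]
        = (Nat.card {c' : Fin (n - 1) → S // Monotone c' ∧ ∀ i, c' i ≤ y} : ℝ≥0∞)⁻¹) := by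
  refine ⟨fun n hn y hy => ?_, fun n _ y c hc hcy =>
    cond_ladderEvent_ladderVar_eq hmeas hindep hdist hsupp hpdf hrate hfin (n - 1) y c hc hcy⟩
  obtain ⟨m, rfl⟩ := Nat.exists_eq_add_of_le' hn
  exact measure_ladderEvent_of_constRate hmeas hindep hdist hsupp hpdf hrate
    fun i hi => hy i (by omega)

/-- For an IID sequence with common PDF `f` (support `S`) of constant
rate `α` on a standard discrete poset, the ladder variables satisfy
`P(Y₁ = y₁, …, Y_n = y_n) = αⁿ F(y_n)` for every increasing chain `y₁ ⪯ ⋯ ⪯ y_n`;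
consequently, given `Y_n = y`, the vector `(Y₁, …, Y_{n−1})` is uniformly distributed
on the set of chains `y₁ ⪯ ⋯ ⪯ y_{n−1} ⪯ y`. -/
theorem ladderVar_joint_pdf_constantRate
    {S : Type*} [Countable S] [PartialOrder S] [MeasurableSpace S]
    [MeasurableSingletonClass S]
    (hfin : ∀ x : S, {t : S | t ≤ x}.Finite)
    {Ω : Type*} [MeasurableSpace Ω] (P : Measure Ω) [IsProbabilityMeasure P]
    (f : S → ℝ≥0)
    (hsupp : ∀ x : S, 0 < f x)
    (hpdf : ∑' x : S, (f x : ℝ≥0∞) = 1)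
    (α : ℝ) (hα : 0 < α)
    (hrate : ∀ x : S, (f x : ℝ≥0∞) = ENNReal.ofReal α * upf f x)
    (X : ℕ → Ω → S)
    (hmeas : ∀ i, Measurable (X i))
    (hindep : iIndepFun X P)
    (hdist : ∀ i (x : S), P (X i ⁻¹' {x}) = (f x : ℝ≥0∞)) :
    (∀ n : ℕ, 1 ≤ n → ∀ y : ℕ → S, (∀ i, i + 1 < n → y i ≤ y (i + 1)) →
      P {ω | ∀ i < n, ladderVar X i ω = y i}
        = ENNReal.ofReal α ^ n * upf f (y (n - 1))) ∧
    (∀ n : ℕ, 1 ≤ n → ∀ y : S, ∀ c : ℕ → S,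
      (∀ i, i + 1 < n - 1 → c i ≤ c (i + 1)) → (∀ i, i < n - 1 → c i ≤ y) →
      P[{ω | ∀ i < n - 1, ladderVar X i ω = c i} | {ω | ladderVar X (n - 1) ω = y}]
        = (Nat.card {c' : Fin (n - 1) → S // Monotone c' ∧ ∀ i, c' i ≤ y} : ℝ≥0∞)⁻¹) :=
  ladderVar_joint_pdf_constantRate_general hfin P f hsupp hpdf α hrate X hmeas hindep hdist
end

section
/- Let (S, ⪯) be a rooted tree and suppose F : S → (0, 1] satisfies F(e) = 1 and F(x) ≥ ∑_{y ∈ A(x)} F(y) for all x ∈ S. For p ∈ (0,1) define F_p : S → (0,1] by F_p(x) = p^{d(x)} F(x). Then F_p is the upper probability function of a probability density function on S. -/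
/-! Put `g x = p ^ depth x * F x` and `f x = g x - ∑_{x ⋖ y} g y`, which is nonnegative because
`g` of the children of `x` sums to at most `p * g x`. Grouping the subtree above `x` by depth, the
mass of level `n + 1` is the children-sum over level `n`, hence at most `p` times the mass of
level `n`. So the levels decay geometrically, and summing `f` over the subtree telescopes level by
level down to `g x`; at the root this is `g ⊥ = 1`. -/

open scoped ENNReal NNReal

noncomputable def depth {S : Type*} [PartialOrder S] (x : S) : ℕ :=
  Nat.card {t : S // t ≤ x} - 1

namespace ENNReal

variable {ι : Type*}

theorem tsum_sub_of_le {f g : ι → ℝ≥0∞} (hg : ∑' i, g i ≠ ∞) (hle : g ≤ f) :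
    ∑' i, (f i - g i) = ∑' i, f i - ∑' i, g i :=
  ENNReal.eq_sub_of_add_eq hg <| by
    rw [← ENNReal.tsum_add]
    exact tsum_congr fun i => tsub_add_cancel_of_le (hle i)

theorem tsum_sub_succ_of_antitone {a : ℕ → ℝ≥0∞} (ha : Antitone a)
    (hsum : ∑' n, a (n + 1) ≠ ∞) : ∑' n, (a n - a (n + 1)) = a 0 := by
  rw [ENNReal.tsum_sub hsum fun n => ha n.le_succ, tsum_eq_zero_add' ENNReal.summable,
    ENNReal.add_sub_cancel_right hsum]

end ENNReal

section RootedTree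

variable {S : Type*} [PartialOrder S] {x y u : S}
  (hfin : ∀ x : S, {t : S | t ≤ x}.Finite)
  (htree : ∀ x a b : S, a ≤ x → b ≤ x → a ≤ b ∨ b ≤ a)

lemma depth_eq_ncard_sub_one (x : S) : depth x = (Set.Iic x).ncard - 1 := by
  rw [depth, ← Nat.card_coe_set_eq]
  rfl

lemma depth_bot [OrderBot S] : depth (⊥ : S) = 0 := by
  simp [depth_eq_ncard_sub_one]

include hfin in
lemma depth_lt_depth (h : x < y) : depth x < depth y := by
  have hlt := Set.ncard_lt_ncard (Set.Iic_ssubset_Iic.2 h) (hfin y)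
  have hpos : 0 < (Set.Iic x).ncard := (Set.ncard_pos (hfin x)).2 ⟨x, le_rfl⟩
  rw [depth_eq_ncard_sub_one, depth_eq_ncard_sub_one]
  omega

include hfin in
lemma depth_le_depth (h : x ≤ y) : depth x ≤ depth y := by
  rcases h.lt_or_eq with h | rfl
  exacts [(depth_lt_depth hfin h).le, le_rfl]

include htree in
lemma CovBy.Iic_eq_insert (h : x ⋖ y) : Set.Iic y = insert y (Set.Iic x) := by
  refine subset_antisymm (fun t ht => ?_) (Set.insert_subset le_rfl (Set.Iic_subset_Iic.2 h.le))
  rcases (htree y t x ht h.le).symm with hxt | htx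
  · rcases hxt.lt_or_eq with hxt | rfl
    · exact .inl ((ht.lt_or_eq).resolve_left (h.2 hxt))
    · exact .inr le_rfl
  · exact .inr htx

include hfin htree in
lemma CovBy.depth_eq (h : x ⋖ y) : depth y = depth x + 1 := by
  have hpos : 0 < (Set.Iic x).ncard := (Set.ncard_pos (hfin x)).2 ⟨x, le_rfl⟩
  rw [depth_eq_ncard_sub_one, depth_eq_ncard_sub_one, h.Iic_eq_insert htree,
    Set.ncard_insert_of_notMem (show y ∉ Set.Iic x from h.lt.not_ge) (hfin x)]
  omega

include htree in
lemma CovBy.unique_left_of_tree (hx : x ⋖ u) (hy : y ⋖ u) : x = y := by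
  rcases htree u x y hx.le hy.le with hxy | hyx
  · exact (hxy.lt_or_eq).resolve_left fun h => hx.2 h hy.lt
  · exact ((hyx.lt_or_eq).resolve_left fun h => hy.2 h hx.lt).symm

include hfin in
lemma exists_le_covBy_of_lt_of_finite_Iic (h : x < u) : ∃ y, x ≤ y ∧ y ⋖ u := by
  have hIco : (Set.Ico x u).Finite := (hfin u).subset fun _ ht => ht.2.le
  obtain ⟨y, ⟨hxy, hyu⟩, hmax⟩ := hIco.exists_maximal ⟨x, le_rfl, h⟩
  exact ⟨y, hxy, hyu, fun z hyz hzu => hyz.not_ge (hmax ⟨hxy.trans hyz.le, hzu⟩ hyz.le)⟩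

end RootedTree

section TreeSums

variable {S : Type*} [PartialOrder S] {x : S}
  (hfin : ∀ x : S, {t : S | t ≤ x}.Finite)
  (htree : ∀ x a b : S, a ≤ x → b ≤ x → a ≤ b ∨ b ≤ a)

def depthLevel (x : S) (n : ℕ) : Set S := {t | x ≤ t ∧ depth t = depth x + n}

noncomputable def childSum (g : S → ℝ≥0∞) (x : S) : ℝ≥0∞ :=
  ∑' y : {y : S // x ⋖ y}, g y

lemma pairwiseDisjoint_depthLevel (x : S) :
    (Set.univ : Set ℕ).PairwiseDisjoint (depthLevel x) :=
  fun _ _ _ _ hmn => Set.disjoint_left.2 fun _ hm hn => hmn (by have := hm.2.symm.trans hn.2; omega)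

include hfin in
lemma iUnion_depthLevel (x : S) : ⋃ n, depthLevel x n = Set.Ici x := by
  refine subset_antisymm (Set.iUnion_subset fun n t ht => ht.1) fun t ht => ?_
  exact Set.mem_iUnion.2 ⟨depth t - depth x, ht, by have := depth_le_depth hfin ht; omega⟩

include hfin in
lemma depthLevel_zero (x : S) : depthLevel x 0 = {x} := by
  refine Set.eq_singleton_iff_unique_mem.2 ⟨⟨le_rfl, rfl⟩, fun t ⟨hxt, ht⟩ => ?_⟩
  exact ((hxt.lt_or_eq).resolve_left fun h => (depth_lt_depth hfin h).ne' ht).symm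

include hfin htree in
lemma depthLevel_succ (x : S) (n : ℕ) :
    depthLevel x (n + 1) = ⋃ t ∈ depthLevel x n, {y | t ⋖ y} := by
  ext u
  simp only [Set.mem_iUnion, Set.mem_ofPred_eq, depthLevel, exists_prop]
  constructor
  · rintro ⟨hxu, hu⟩
    have hxu : x < u := hxu.lt_of_ne fun h => by subst h; omega
    obtain ⟨t, hxt, htu⟩ := exists_le_covBy_of_lt_of_finite_Iic hfin hxu
    exact ⟨t, ⟨hxt, by have := htu.depth_eq hfin htree; omega⟩, htu⟩
  · rintro ⟨t, ⟨hxt, ht⟩, htu⟩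
    exact ⟨hxt.trans htu.le, by rw [htu.depth_eq hfin htree, ht, add_assoc]⟩

include htree in
lemma pairwiseDisjoint_covBy (s : Set S) : s.PairwiseDisjoint fun t => {y | t ⋖ y} :=
  fun _ _ _ _ hne => Set.disjoint_left.2 fun _ h h' => hne (h.unique_left_of_tree htree h')

include hfin in
lemma tsum_Ici_eq_tsum_depthLevel (g : S → ℝ≥0∞) (x : S) :
    ∑' t : Set.Ici x, g t = ∑' n, ∑' t : depthLevel x n, g t := by
  rw [← iUnion_depthLevel hfin, ENNReal.tsum_biUnion (pairwiseDisjoint_depthLevel x)]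

include hfin in
lemma tsum_depthLevel_zero (g : S → ℝ≥0∞) (x : S) : ∑' t : depthLevel x 0, g t = g x := by
  rw [depthLevel_zero hfin, tsum_singleton]

include hfin htree in
lemma tsum_depthLevel_succ (g : S → ℝ≥0∞) (x : S) (n : ℕ) :
    ∑' t : depthLevel x (n + 1), g t = ∑' t : depthLevel x n, childSum g t := by
  rw [depthLevel_succ hfin htree, ENNReal.tsum_biUnion' (pairwiseDisjoint_covBy htree _)]
  rfl

include hfin htree in
lemma tsum_depthLevel_le_pow_mul {g : S → ℝ≥0∞} {c : ℝ≥0∞}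
    (hchild : ∀ t, childSum g t ≤ c * g t) (x : S) (n : ℕ) :
    ∑' t : depthLevel x n, g t ≤ c ^ n * g x := by
  induction n with
  | zero => rw [tsum_depthLevel_zero hfin, pow_zero, one_mul]
  | succ n ih =>
    calc ∑' t : depthLevel x (n + 1), g t
        = ∑' t : depthLevel x n, childSum g t := tsum_depthLevel_succ hfin htree g x n
      _ ≤ ∑' t : depthLevel x n, c * g t := ENNReal.tsum_le_tsum fun t => hchild t
      _ = c * ∑' t : depthLevel x n, g t := ENNReal.tsum_mul_left
      _ ≤ c * (c ^ n * g x) := by gcongr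
      _ = c ^ (n + 1) * g x := by rw [pow_succ', mul_assoc]

include hfin htree in
theorem tsum_Ici_sub_childSum {g : S → ℝ≥0∞} {c : ℝ≥0∞} (hc : c < 1)
    (hchild : ∀ t, childSum g t ≤ c * g t) (hgx : g x ≠ ∞) :
    ∑' t : Set.Ici x, (g t - childSum g t) = g x := by
  set L : ℕ → ℝ≥0∞ := fun n => ∑' t : depthLevel x n, g t
  have hL_succ : ∀ n, L (n + 1) = ∑' t : depthLevel x n, childSum g t :=
    tsum_depthLevel_succ hfin htree g x
  have hL_le : ∀ n, L n ≤ c ^ n * g x := tsum_depthLevel_le_pow_mul hfin htree hchild x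
  have hL_ne_top : ∀ n, L n ≠ ∞ := fun n =>
    ne_top_of_le_ne_top (ENNReal.mul_ne_top (ENNReal.pow_ne_top (ne_top_of_lt hc)) hgx) (hL_le n)
  have hchild_le : ∀ t, childSum g t ≤ g t := fun t =>
    (hchild t).trans (mul_le_of_le_one_left' hc.le)
  have hL_anti : Antitone L := antitone_nat_of_succ_le fun n => by
    rw [hL_succ]
    exact ENNReal.tsum_le_tsum fun t => hchild_le t
  have hL_tail : ∑' n, L (n + 1) ≠ ∞ := by
    refine ne_top_of_le_ne_top ?_
      (ENNReal.tsum_le_tsum fun n => (hL_anti n.le_succ).trans (hL_le n))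
    rw [ENNReal.tsum_mul_right, ENNReal.tsum_geometric]
    exact ENNReal.mul_ne_top (ENNReal.inv_ne_top.2 (tsub_pos_of_lt hc).ne') hgx
  calc ∑' t : Set.Ici x, (g t - childSum g t)
      = ∑' n, ∑' t : depthLevel x n, (g t - childSum g t) :=
        tsum_Ici_eq_tsum_depthLevel hfin (fun t => g t - childSum g t) x
    _ = ∑' n, (L n - L (n + 1)) := tsum_congr fun n => by
        have hfinite := hL_ne_top (n + 1)
        rw [hL_succ] at hfinite
        rw [ENNReal.tsum_sub_of_le hfinite fun t => hchild_le t, hL_succ]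
    _ = g x := by
        rw [ENNReal.tsum_sub_succ_of_antitone hL_anti hL_tail]
        exact tsum_depthLevel_zero hfin g x

include hfin htree in
lemma childSum_ofReal_pow_depth_mul_le {F : S → ℝ} {p : ℝ} (hp : 0 ≤ p)
    (hF : ∀ x : S, ∑' y : {y : S // x ⋖ y}, ENNReal.ofReal (F y) ≤ ENNReal.ofReal (F x))
    (x : S) :
    childSum (fun t => ENNReal.ofReal (p ^ depth t * F t)) x
      ≤ ENNReal.ofReal p * ENNReal.ofReal (p ^ depth x * F x) := by
  have hchild (y : {y : S // x ⋖ y}) : ENNReal.ofReal (p ^ depth (y : S) * F y)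
      = ENNReal.ofReal p * ENNReal.ofReal (p ^ depth x) * ENNReal.ofReal (F y) := by
    rw [y.2.depth_eq hfin htree, pow_succ', mul_assoc, ENNReal.ofReal_mul hp,
      ENNReal.ofReal_mul (by positivity), mul_assoc]
  calc childSum (fun t => ENNReal.ofReal (p ^ depth t * F t)) x
      = ENNReal.ofReal p * ENNReal.ofReal (p ^ depth x)
          * ∑' y : {y : S // x ⋖ y}, ENNReal.ofReal (F y) := by
        rw [childSum, ← ENNReal.tsum_mul_left]
        exact tsum_congr hchild
    _ ≤ ENNReal.ofReal p * ENNReal.ofReal (p ^ depth x) * ENNReal.ofReal (F x) := by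
        gcongr
        exact hF x
    _ = ENNReal.ofReal p * ENNReal.ofReal (p ^ depth x * F x) := by
        rw [ENNReal.ofReal_mul (by positivity), mul_assoc]

end TreeSums

theorem tree_upf_of_subUPF_general
    {S : Type*} [PartialOrder S] [OrderBot S]
    (hfin : ∀ x : S, {t : S | t ≤ x}.Finite)
    (htree : ∀ x a b : S, a ≤ x → b ≤ x → a ≤ b ∨ b ≤ a)
    (F : S → ℝ)
    (hFe : F ⊥ = 1)
    (hFsub : ∀ x : S, ∑' y : {y : S // x ⋖ y}, ENNReal.ofReal (F y)
      ≤ ENNReal.ofReal (F x))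
    (p : ℝ) (hp0 : 0 < p) (hp1 : p < 1) :
    ∃ f : S → ℝ≥0, (∑' x : S, (f x : ℝ≥0∞) = 1) ∧
      ∀ x : S, ENNReal.ofReal (p ^ depth x * F x)
        = ∑' t : {t : S // x ≤ t}, (f t : ℝ≥0∞) := by
  set g : S → ℝ≥0∞ := fun x => ENNReal.ofReal (p ^ depth x * F x)
  have hupf (x : S) : ∑' t : {t : S // x ≤ t}, (g t - childSum g t) = g x :=
    tsum_Ici_sub_childSum hfin htree (ENNReal.ofReal_lt_one.2 hp1)
      (childSum_ofReal_pow_depth_mul_le hfin htree hp0.le hFsub) ENNReal.ofReal_ne_top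
  have hf (x : S) : ((g x - childSum g x).toNNReal : ℝ≥0∞) = g x - childSum g x :=
    ENNReal.coe_toNNReal (ne_top_of_le_ne_top ENNReal.ofReal_ne_top tsub_le_self)
  refine ⟨fun x => (g x - childSum g x).toNNReal, ?_, fun x => ?_⟩
  · rw [← (Equiv.subtypeUnivEquiv fun t : S => (bot_le : ⊥ ≤ t)).tsum_eq]
    simp only [Equiv.subtypeUnivEquiv_apply, hf]
    rw [hupf ⊥]
    simp [g, depth_bot, hFe]
  · simp only [hf]
    exact (hupf x).symm

/-- Let `(S, ⪯)` be a rooted tree and suppose `F : S → (0,1]`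
satisfies `F(e) = 1` and `F(x) ≥ ∑_{y ∈ A(x)} F(y)` for all `x` (where `A(x)` is the
set of children of `x`). For `p ∈ (0,1)`, the function `F_p(x) = p^{d(x)} F(x)` is the
upper probability function of a probability density function on `S`. -/
theorem tree_upf_of_subUPF
    {S : Type*} [Countable S] [PartialOrder S] [OrderBot S]
    (hfin : ∀ x : S, {t : S | t ≤ x}.Finite)
    (htree : ∀ x a b : S, a ≤ x → b ≤ x → a ≤ b ∨ b ≤ a)
    (F : S → ℝ) (hF0 : ∀ x : S, 0 < F x) (hF1 : ∀ x : S, F x ≤ 1)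
    (hFe : F ⊥ = 1)
    (hFsub : ∀ x : S, ∑' y : {y : S // x ⋖ y}, ENNReal.ofReal (F y)
      ≤ ENNReal.ofReal (F x))
    (p : ℝ) (hp0 : 0 < p) (hp1 : p < 1) :
    ∃ f : S → ℝ≥0, (∑' x : S, (f x : ℝ≥0∞) = 1) ∧
      ∀ x : S, ENNReal.ofReal (p ^ depth x * F x)
        = ∑' t : {t : S // x ≤ t}, (f t : ℝ≥0∞) :=
  tree_upf_of_subUPF_general hfin htree F hFe hFsub p hp0 hp1
end

section
/- Let (S, ⪯) be a rooted tree and let X be a random variable with values in S whose PDF f has support S and constant rate α. Then d(X) has the geometric distribution on ℕ with rate α: P(d(X) ≥ n) = (1 − α)^n for all n ∈ ℕ. -/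
open scoped ENNReal NNReal

/-!
Let `G n = P(d(X) ≥ n)`. Every node of depth `≥ n` lies above exactly one node of depth `n`,
so `G n` is the sum of the UPF over the level `A_n`, and by the constant rate the mass of
`A_n` is `α G n`. Hence `G (n + 1) = G n - α G n = (1 - α) G n`, and `G 0 = 1`.
-/

section Depth

variable {S : Type*} [PartialOrder S]

lemma depth_add_one {x : S} (hx : (Set.Iic x).Finite) : depth x + 1 = (Set.Iic x).ncard := by
  have hpos : 0 < (Set.Iic x).ncard := (Set.ncard_pos hx).2 ⟨x, le_rfl⟩
  have hcard : depth x = (Set.Iic x).ncard - 1 :=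
    congrArg (· - 1) (Nat.card_coe_set_eq (Set.Iic x))
  omega

lemma depth_strictMono (hfin : ∀ x : S, (Set.Iic x).Finite) : StrictMono (depth : S → ℕ) := by
  intro a b hab
  have := Set.ncard_lt_ncard (Set.Iic_ssubset_Iic.2 hab) (hfin b)
  rw [← depth_add_one (hfin a), ← depth_add_one (hfin b)] at this
  omega

variable (hfin : ∀ x : S, (Set.Iic x).Finite)
  (htree : ∀ x a b : S, a ≤ x → b ≤ x → a ≤ b ∨ b ≤ a)
include hfin htree

lemma depth_injOn_Iic (t : S) : Set.InjOn depth (Set.Iic t) := by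
  intro a ha b hb hab
  rcases htree t a b ha hb with h | h
  · exact h.eq_of_not_lt fun h' => (depth_strictMono hfin h').ne hab
  · exact (h.eq_of_not_lt fun h' => (depth_strictMono hfin h').ne hab.symm).symm

lemma image_depth_Iic (t : S) : depth '' Set.Iic t = Set.Iic (depth t) := by
  refine Set.eq_of_subset_of_ncard_le ?_ ?_ (Set.finite_Iic _)
  · rintro _ ⟨s, hs, rfl⟩
    exact (depth_strictMono hfin).monotone hs
  · rw [(depth_injOn_Iic hfin htree t).ncard_image, Set.ncard_Iic_nat,
      depth_add_one (hfin t)]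

lemma exists_le_depth_eq {t : S} {n : ℕ} (hn : n ≤ depth t) : ∃ x ≤ t, depth x = n := by
  obtain ⟨x, hx, hxn⟩ := (image_depth_Iic hfin htree t).superset hn
  exact ⟨x, hx, hxn⟩

end Depth

section TailMass

variable {S : Type*} [PartialOrder S]

noncomputable def tailMass (f : S → ℝ≥0) (n : ℕ) : ℝ≥0∞ :=
  ∑' t : {t : S // n ≤ depth t}, (f t : ℝ≥0∞)

lemma tailMass_zero (f : S → ℝ≥0) : tailMass f 0 = ∑' x, (f x : ℝ≥0∞) :=
  (Equiv.subtypeUnivEquiv fun t => Nat.zero_le (depth t)).tsum_eq fun t => (f t : ℝ≥0∞)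

lemma tailMass_le_tsum (f : S → ℝ≥0) (n : ℕ) : tailMass f n ≤ ∑' x, (f x : ℝ≥0∞) :=
  ENNReal.tsum_comp_le_tsum_of_injective Subtype.val_injective _

lemma tailMass_eq_tsum_level_add (f : S → ℝ≥0) (n : ℕ) :
    tailMass f n = ∑' x : {x : S // depth x = n}, (f x : ℝ≥0∞) + tailMass f (n + 1) := by
  have hunion : {x : S | depth x = n} ∪ {x | n + 1 ≤ depth x} = {x | n ≤ depth x} := by
    ext x; simp only [Set.mem_union, Set.mem_ofPred_eq]; omega
  have hdisj : Disjoint {x : S | depth x = n} {x | n + 1 ≤ depth x} :=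
    Set.disjoint_left.2 fun x h1 h2 => by simp only [Set.mem_ofPred_eq] at h1 h2; omega
  have := ENNReal.summable.tsum_union_disjoint (f := fun x => (f x : ℝ≥0∞)) hdisj
    ENNReal.summable
  rwa [hunion] at this

lemma tailMass_eq_tsum_upf (hfin : ∀ x : S, (Set.Iic x).Finite)
    (htree : ∀ x a b : S, a ≤ x → b ≤ x → a ≤ b ∨ b ≤ a) (f : S → ℝ≥0) (n : ℕ) :
    tailMass f n = ∑' x : {x : S // depth x = n}, upf f x := by
  let e : (Σ x : {x : S // depth x = n}, {t : S // (x : S) ≤ t}) → {t : S // n ≤ depth t} :=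
    fun p => ⟨p.2, p.1.2.symm.trans_le ((depth_strictMono hfin).monotone p.2.2)⟩
  have he : Function.Bijective e := by
    constructor
    · rintro ⟨⟨x, hx⟩, ⟨t, hxt⟩⟩ ⟨⟨y, hy⟩, ⟨u, hyu⟩⟩ h
      obtain rfl : t = u := congrArg Subtype.val h
      obtain rfl : x = y := depth_injOn_Iic hfin htree t hxt hyu (hx.trans hy.symm)
      rfl
    · rintro ⟨t, ht⟩
      obtain ⟨x, hxt, hxn⟩ := exists_le_depth_eq hfin htree ht
      exact ⟨⟨⟨x, hxn⟩, ⟨t, hxt⟩⟩, rfl⟩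
  rw [tailMass, ← (Equiv.ofBijective e he).tsum_eq]
  exact ENNReal.tsum_sigma' _

lemma tailMass_succ_of_constantRate (hfin : ∀ x : S, (Set.Iic x).Finite)
    (htree : ∀ x a b : S, a ≤ x → b ≤ x → a ≤ b ∨ b ≤ a) {f : S → ℝ≥0} {r : ℝ≥0∞}
    (hrate : ∀ x, (f x : ℝ≥0∞) = r * upf f x) (n : ℕ) (hn : tailMass f n ≠ ∞) :
    tailMass f (n + 1) = (1 - r) * tailMass f n := by
  have hlevel : ∑' x : {x : S // depth x = n}, (f x : ℝ≥0∞) = r * tailMass f n := by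
    simp_rw [hrate, ENNReal.tsum_mul_left, tailMass_eq_tsum_upf hfin htree]
  have hsplit : tailMass f (n + 1) + r * tailMass f n = tailMass f n := by
    rw [add_comm, ← hlevel]
    exact (tailMass_eq_tsum_level_add f n).symm
  have hlevel_ne_top : r * tailMass f n ≠ ∞ :=
    ne_top_of_le_ne_top hn (le_add_self.trans_eq hsplit)
  rw [ENNReal.sub_mul fun _ _ => hn, one_mul]
  exact ENNReal.eq_sub_of_add_eq hlevel_ne_top hsplit

lemma tailMass_of_constantRate (hfin : ∀ x : S, (Set.Iic x).Finite)
    (htree : ∀ x a b : S, a ≤ x → b ≤ x → a ≤ b ∨ b ≤ a) {f : S → ℝ≥0} {r : ℝ≥0∞}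
    (hrate : ∀ x, (f x : ℝ≥0∞) = r * upf f x) (hf : ∑' x, (f x : ℝ≥0∞) ≠ ∞) (n : ℕ) :
    tailMass f n = (1 - r) ^ n * ∑' x, (f x : ℝ≥0∞) := by
  induction n with
  | zero => rw [pow_zero, one_mul, tailMass_zero]
  | succ n ih =>
    rw [tailMass_succ_of_constantRate hfin htree hrate n
      (ne_top_of_le_ne_top hf (tailMass_le_tsum f n)), ih, pow_succ', mul_assoc]

lemma measure_depth_ge_eq_tailMass [Countable S] [MeasurableSpace S]
    [MeasurableSingletonClass S] {Ω : Type*} [MeasurableSpace Ω] (P : MeasureTheory.Measure Ω)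
    {X : Ω → S} (hX : Measurable X)
    {f : S → ℝ≥0} (hdist : ∀ x, P (X ⁻¹' {x}) = f x) (n : ℕ) :
    P {ω | n ≤ depth (X ω)} = tailMass f n := by
  calc P (X ⁻¹' {t | n ≤ depth t})
      = ∑' t : {t : S | n ≤ depth t}, P (X ⁻¹' {(t : S)}) :=
        (MeasureTheory.tsum_measure_preimage_singleton (Set.to_countable _)
          fun y _ => hX (measurableSet_singleton y)).symm
    _ = tailMass f n := tsum_congr fun t => hdist t

end TailMass

theorem tree_depth_geometric_of_constantRate_general
    {S : Type*} [Countable S] [PartialOrder S] [MeasurableSpace S]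
    [MeasurableSingletonClass S]
    (hfin : ∀ x : S, {t : S | t ≤ x}.Finite)
    (htree : ∀ x a b : S, a ≤ x → b ≤ x → a ≤ b ∨ b ≤ a)
    (f : S → ℝ≥0)
    (hpdf : ∑' x : S, (f x : ℝ≥0∞) = 1)
    (α : ℝ) (hα : 0 < α)
    (hrate : ∀ x : S, (f x : ℝ≥0∞) = ENNReal.ofReal α * upf f x)
    {Ω : Type*} [MeasurableSpace Ω] (P : MeasureTheory.Measure Ω)
    (X : Ω → S) (hX : Measurable X)
    (hdist : ∀ x : S, P (X ⁻¹' {x}) = (f x : ℝ≥0∞)) :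
    ∀ n : ℕ, P {ω | n ≤ depth (X ω)} = ENNReal.ofReal (1 - α) ^ n := by
  intro n
  rw [measure_depth_ge_eq_tailMass P hX hdist,
    tailMass_of_constantRate hfin htree hrate (hpdf ▸ ENNReal.one_ne_top), hpdf, mul_one,
    ENNReal.ofReal_sub 1 hα.le, ENNReal.ofReal_one]

/-- Let `(S, ⪯)` be a rooted tree and `X` a random variable in `S`
whose PDF `f` has support `S` and constant rate `α`. Then `d(X)` is geometric with
rate `α`: `P(d(X) ≥ n) = (1 − α)ⁿ` for all `n ∈ ℕ`. -/
theorem tree_depth_geometric_of_constantRate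
    {S : Type*} [Countable S] [PartialOrder S] [OrderBot S] [MeasurableSpace S]
    [MeasurableSingletonClass S]
    (hfin : ∀ x : S, {t : S | t ≤ x}.Finite)
    (htree : ∀ x a b : S, a ≤ x → b ≤ x → a ≤ b ∨ b ≤ a)
    (f : S → ℝ≥0)
    (hsupp : ∀ x : S, 0 < f x)
    (hpdf : ∑' x : S, (f x : ℝ≥0∞) = 1)
    (α : ℝ) (hα : 0 < α)
    (hrate : ∀ x : S, (f x : ℝ≥0∞) = ENNReal.ofReal α * upf f x)
    {Ω : Type*} [MeasurableSpace Ω] (P : MeasureTheory.Measure Ω)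
    [MeasureTheory.IsProbabilityMeasure P]
    (X : Ω → S) (hX : Measurable X)
    (hdist : ∀ x : S, P (X ⁻¹' {x}) = (f x : ℝ≥0∞)) :
    ∀ n : ℕ, P {ω | n ≤ depth (X ω)} = ENNReal.ofReal (1 - α) ^ n :=
  tree_depth_geometric_of_constantRate_general hfin htree f hpdf α hα hrate P X hX hdist
end
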